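/- Let n and N be integers with n < N - 1, and let δ : ℤ → ℤ be a function satisfying δ(n) = 0 and the midpoint inequality δ(m-1) + δ(m+1) ≥ 2·δ(m) for every integer m with n < m < N - 1. If m is an integer with n < m < N - 1 such that δ(m) > 0 and δ(m+1) = δ(m) + 1, then δ(m - i) = δ(m) - i for every integer i with 0 ≤ i ≤ δ(m); in particular δ(m) ≤ m - n, so all the arguments m - i lie in [n, N-1]. -/

import Mathlib

/-!
The midpoint inequality says that the slopes `δ k - δ (k - 1)` are nondecreasing on `(n, N - 1]`,
so they are at most `δ (m + 1) - δ m = 1` up to `m + 1`. Telescoping from `n`, where `δ n = 0`,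
gives `δ m - δ k ≤ m - k`, hence `δ m ≤ m - n`. A slope `≤ 0` at some `k ∈ (m - δ m, m]` would
make every slope on `(n, k]` nonpositive and so `δ k ≤ δ n = 0`, against `δ k ≥ δ m - (m - k) > 0`.
Hence the slopes on `(m - δ m, m]` are exactly `1`.
-/

section IntSlopes

variable {f : ℤ → ℤ} {a b c : ℤ}

theorem sub_le_mul_of_forall_sub_pred_le (hab : a ≤ b)
    (h : ∀ k, a < k → k ≤ b → f k - f (k - 1) ≤ c) : f b - f a ≤ c * (b - a) := by
  induction b, hab using Int.leInduction with
  | base => simp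
  | succ b hab ih =>
    have hstep := h (b + 1) (by omega) le_rfl
    rw [add_sub_cancel_right] at hstep
    linarith [ih fun k hak hkb => h k hak (by omega)]

theorem mul_le_sub_of_forall_le_sub_pred (hab : a ≤ b)
    (h : ∀ k, a < k → k ≤ b → c ≤ f k - f (k - 1)) : c * (b - a) ≤ f b - f a := by
  have := sub_le_mul_of_forall_sub_pred_le (f := fun k => -f k) (c := -c) hab
    fun k hak hkb => by linarith [h k hak hkb]
  linarith

theorem sub_pred_le_sub_pred_of_midpoint_convex
    (hconv : ∀ k, a < k → k < b → f (k - 1) + f (k + 1) ≥ 2 * f k)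
    {k l : ℤ} (hak : a < k) (hkl : k ≤ l) (hlb : l ≤ b) :
    f k - f (k - 1) ≤ f l - f (l - 1) := by
  induction l, hkl using Int.leInduction with
  | base => rfl
  | succ l hkl ih =>
    have hmid := hconv l (by omega) (by omega)
    rw [add_sub_cancel_right]
    linarith [ih (by omega)]

end IntSlopes

theorem defect_decrease_all_general (n N : ℤ) (δ : ℤ → ℤ)
    (hn : δ n = 0)
    (hmid : ∀ m : ℤ, n < m → m < N - 1 → δ (m - 1) + δ (m + 1) ≥ 2 * δ m)
    (m : ℤ) (hnm : n < m) (hmN : m < N - 1)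
    (hstep : δ (m + 1) = δ m + 1) :
    (∀ i : ℤ, 0 ≤ i → i ≤ δ m → δ (m - i) = δ m - i) ∧ δ m ≤ m - n := by
  have hslope_mono : ∀ k l, n < k → k ≤ l → l ≤ N - 1 → δ k - δ (k - 1) ≤ δ l - δ (l - 1) :=
    fun k l => sub_pred_le_sub_pred_of_midpoint_convex hmid
  have hslope_le_one : ∀ k, n < k → k ≤ m + 1 → δ k - δ (k - 1) ≤ 1 := fun k hnk hkm => by
    simpa [hstep] using hslope_mono k (m + 1) hnk hkm (by omega)
  have hdrop : ∀ k, n ≤ k → k ≤ m → δ m - δ k ≤ m - k := fun k hnk hkm => by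
    simpa using sub_le_mul_of_forall_sub_pred_le hkm
      fun j hkj hjm => hslope_le_one j (by omega) (by omega)
  have hmn : δ m ≤ m - n := by simpa [hn] using hdrop n le_rfl hnm.le
  have hslope_one : ∀ k, m - δ m < k → k ≤ m → 1 ≤ δ k - δ (k - 1) := fun k hk hkm => by
    by_contra! hneg
    have hδk : δ k - δ n ≤ 0 := by
      simpa using sub_le_mul_of_forall_sub_pred_le (c := 0) (by omega : n ≤ k)
        fun j hnj hjk => (hslope_mono j k hnj hjk (by omega)).trans (by omega)
    linarith [hdrop k (by omega) hkm]
  refine ⟨fun i hi hiδ => ?_, hmn⟩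
  have hrise := mul_le_sub_of_forall_le_sub_pred (c := 1) (by omega : m - i ≤ m)
    fun k hk hkm => hslope_one k (by omega) hkm
  linarith [hdrop (m - i) (by omega) (by omega)]

/-- Corollary 3.3(2), second assertion: if `δ n = 0`, the midpoint inequality
holds, `δ m > 0` and `δ (m+1) = δ m + 1` for some `n < m < N - 1`, then
`δ (m - i) = δ m - i` for all `0 ≤ i ≤ δ m`; in particular `δ m ≤ m - n`. -/
theorem defect_decrease_all (n N : ℤ) (hnN : n < N - 1) (δ : ℤ → ℤ)
    (hn : δ n = 0)
    (hmid : ∀ m : ℤ, n < m → m < N - 1 → δ (m - 1) + δ (m + 1) ≥ 2 * δ m)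
    (m : ℤ) (hnm : n < m) (hmN : m < N - 1)
    (hpos : δ m > 0) (hstep : δ (m + 1) = δ m + 1) :
    (∀ i : ℤ, 0 ≤ i → i ≤ δ m → δ (m - i) = δ m - i) ∧ δ m ≤ m - n :=
  defect_decrease_all_general n N δ hn hmid m hnm hmN hstep
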